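/- arXiv:2508.08802 — 12 statements merged into one kernel-verified Lean document; each statement's English description precedes it below -/
import Mathlib

section
/- Let r be a positive integer and x_k = π/(2r) + (k-1)π/r for k = 1,…,r. Define the r×r matrix A with entries A_{k,j} = sin(j·x_k). Then AᵀA is the diagonal matrix with diagonal entries (r/2, r/2, …, r/2, r), i.e., the (j,j) entry equals r/2 for j = 1,…,r-1 and equals r for j = r, and all off-diagonal entries of AᵀA are zero. -/
/-!
The nodes `x_i = (2i+1)π/(2r)` are the zeros of the Chebyshev polynomial `T_r`. Product-to-sum
turns each entry of `AᵀA` into half a difference `S(j-k) - S(j+k)` of the sums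
`S(m) = ∑ᵢ cos(m xᵢ)`, and `S(0) = r`, `S(2r) = -r`, while `S(m) = 0` whenever `2r ∤ m`
(the discrete orthogonality behind Chebyshev–Gauss quadrature).
-/

open Real Finset Matrix Polynomial.Chebyshev

theorem sum_cos_int_mul_chebyshev_nodes_of_not_dvd {n : ℕ} {k : ℤ} (hn : n ≠ 0)
    (hk : ¬ (2 * n : ℤ) ∣ k) :
    ∑ i ∈ range n, cos (k * ((2 * i + 1) / (2 * n) * π)) = 0 := by
  have h := sumZeroes_T_of_not_dvd (n := n) hk
  simpa [sumZeroes, T_real_cos, hn, pi_ne_zero] using h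

theorem sum_cos_two_mul_chebyshev_nodes (n : ℕ) :
    ∑ i ∈ range n, cos (2 * n * ((2 * i + 1) / (2 * n) * π)) = -n := by
  rcases eq_or_ne n 0 with rfl | hn
  · simp
  have hodd (i : ℕ) : cos (2 * n * ((2 * i + 1) / (2 * n) * π)) = -1 := by
    rw [show 2 * n * ((2 * i + 1) / (2 * n) * π) = ((2 * i + 1 : ℕ) : ℝ) * π by
      push_cast; field_simp, cos_nat_mul_pi, (odd_two_mul_add_one i).neg_one_pow]
  simp [hodd]

theorem sum_sin_mul_sin_chebyshev_nodes {n j k : ℕ} (hj₀ : 0 < j) (hj : j ≤ n)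
    (hk₀ : 0 < k) (hk : k ≤ n) :
    ∑ i ∈ range n, sin (j * ((2 * i + 1) / (2 * n) * π)) * sin (k * ((2 * i + 1) / (2 * n) * π)) =
      if j = k then (if j = n then (n : ℝ) else n / 2) else 0 := by
  have hn : n ≠ 0 := by omega
  have hprod (θ : ℝ) : sin (j * θ) * sin (k * θ) =
      (cos (((j - k : ℤ) : ℝ) * θ) - cos (((j + k : ℤ) : ℝ) * θ)) / 2 := by
    have := two_mul_sin_mul_sin (j * θ) (k * θ)
    push_cast
    rw [sub_mul, add_mul]
    linarith
  have hvanish {m : ℤ} (hm₀ : m ≠ 0) (hm : |m| < 2 * n) :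
      ∑ i ∈ range n, cos (m * ((2 * i + 1) / (2 * n) * π)) = 0 :=
    sum_cos_int_mul_chebyshev_nodes_of_not_dvd hn fun h => hm₀ (Int.eq_zero_of_abs_lt_dvd h hm)
  simp only [hprod, ← sum_div, sum_sub_distrib]
  split_ifs with hjk hjn
  · subst hjk hjn
    rw [show ((j + j : ℤ) : ℝ) = 2 * j by push_cast; ring, sum_cos_two_mul_chebyshev_nodes]
    simp
  · subst hjk
    rw [hvanish (m := j + j) (by omega) (by rw [abs_lt]; omega)]
    simp
  · rw [hvanish (by omega) (by rw [abs_lt]; omega), hvanish (by omega) (by rw [abs_lt]; omega)]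
    simp

theorem gram_matrix_diag_general (r : ℕ)
    (A : Matrix (Fin r) (Fin r) ℝ)
    (hA : ∀ i k : Fin r,
      A i k = Real.sin ((((k : ℕ) : ℝ) + 1) * (π / (2 * r) + (i : ℕ) * (π / r)))) :
    Aᵀ * A = Matrix.diagonal (fun j : Fin r =>
      if (j : ℕ) = r - 1 then (r : ℝ) else (r : ℝ) / 2) := by
  ext j k
  have hnode (i : ℕ) : π / (2 * r) + i * (π / r) = (2 * i + 1) / (2 * r) * π := by
    have hr : (r : ℝ) ≠ 0 := by exact_mod_cast j.pos.ne'
    field_simp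
    ring
  have hgram := sum_sin_mul_sin_chebyshev_nodes (n := r) (j := j + 1) (k := k + 1)
    (by omega) j.isLt (by omega) k.isLt
  rw [Finset.sum_range] at hgram
  push_cast at hgram
  simp only [mul_apply, transpose_apply, hA, hnode, hgram, diagonal_apply, Fin.ext_iff]
  grind

theorem gram_matrix_diag (r : ℕ) (hr : 0 < r)
    (A : Matrix (Fin r) (Fin r) ℝ)
    (hA : ∀ i k : Fin r,
      A i k = Real.sin ((((k : ℕ) : ℝ) + 1) * (π / (2 * r) + (i : ℕ) * (π / r)))) :
    Aᵀ * A = Matrix.diagonal (fun j : Fin r =>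
      if (j : ℕ) = r - 1 then (r : ℝ) else (r : ℝ) / 2) :=
  gram_matrix_diag_general r A hA
end

section
/- Let r be a positive integer and x_k = kπ/r for k = 0,1,…,r. Define the (r+1)×(r+1) matrix A with entries A_{i,j} = cos(j·x_i) for i,j = 0,…,r. Then the entries of E := AᵀA are: E_{ii} = r+1 if i = 0 or i = r; E_{ii} = (r+2)/2 if 0 < i < r; E_{ij} = 1 if i ≠ j and i+j is even; and E_{ij} = 0 if i+j is odd. -/
open Real Finset Matrix

/-!
Product-to-sum turns `(Aᵀ * A) i j` into `(S (i + j) + S (i - j)) / 2`, where `S m` is the sum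
of `cos (m x_k)` over the nodes `x_k = kπ/r`. Every term of `S m` is `1` when `2r ∣ m`. Otherwise
`sin (θ/2) ≠ 0` for `θ = mπ/r`, and the Dirichlet-kernel identity
`2 sin (θ/2) S m = sin ((2r+1) θ/2) + sin (θ/2) = ((-1)^m + 1) sin (θ/2)` gives `S m = 1` for
even `m` and `S m = 0` for odd `m`. For `i, j ≤ r` the only multiples of `2r` among `i ± j` are
`i - j = 0` and `i + j ∈ {0, 2r}`, and `i + j`, `i - j` have the same parity.
-/

noncomputable def nodeCosSum (r : ℕ) (m : ℤ) : ℝ :=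
  ∑ k ∈ range (r + 1), cos (m * (k * π / r))

lemma nodeCosSum_of_dvd {r : ℕ} {m : ℤ} (h : (2 * r : ℤ) ∣ m) : nodeCosSum r m = r + 1 := by
  obtain ⟨t, rfl⟩ := h
  have hterm (k : ℕ) : cos (((2 * r * t : ℤ) : ℝ) * (k * π / r)) = 1 := by
    obtain rfl | hr := eq_or_ne r 0
    · simp
    rw [← cos_int_mul_two_pi (t * k)]
    congr 1
    push_cast
    field_simp
  rw [nodeCosSum, sum_congr rfl fun k _ => hterm k]
  simp

lemma nodeCosSum_of_not_dvd {r : ℕ} (hr : 0 < r) {m : ℤ} (h : ¬ (2 * r : ℤ) ∣ m) :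
    nodeCosSum r m = if Even m then 1 else 0 := by
  set θ : ℝ := m * π / r
  have hsin : sin (θ / 2) ≠ 0 := by
    rw [Ne, sin_eq_zero_iff]
    rintro ⟨t, ht⟩
    refine h ⟨t, ?_⟩
    have : (m : ℝ) = 2 * r * t := by
      simp only [θ] at ht
      field_simp at ht
      linear_combination -ht
    exact_mod_cast this
  have hkernel : 2 * sin (θ / 2) * nodeCosSum r m = ((-1) ^ m + 1) * sin (θ / 2) :=
    calc 2 * sin (θ / 2) * nodeCosSum r m
        = 2 * (sin (θ / 2) * ∑ k ∈ range (r + 1), cos (θ * k + 0)) := by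
          rw [nodeCosSum, mul_assoc]
          congr 2
          refine sum_congr rfl fun k _ => congrArg cos ?_
          ring
      _ = 2 * sin ((r + 1 : ℕ) * θ / 2) * cos (r * θ / 2) := by
          rw [sin_mul_sum_cos]
          push_cast
          ring_nf
      _ = sin (θ / 2) + sin (θ / 2 + m * π) := by
          rw [two_mul_sin_mul_cos]
          congr 2 <;> simp only [θ] <;> push_cast <;> field_simp <;> ring
      _ = ((-1) ^ m + 1) * sin (θ / 2) := by
          rw [sin_add_int_mul_pi]
          ring
  have hS : nodeCosSum r m = ((-1) ^ m + 1) / 2 := by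
    rw [eq_div_iff two_ne_zero]
    apply mul_left_cancel₀ hsin
    linear_combination hkernel
  rcases Int.even_or_odd m with hm | hm
  · rw [hS, if_pos hm, hm.neg_one_zpow]
    norm_num
  · rw [hS, if_neg (Int.not_even_iff_odd.mpr hm), hm.neg_one_zpow]
    norm_num

lemma transpose_mul_self_apply_eq_nodeCosSum {r : ℕ} {A : Matrix (Fin (r + 1)) (Fin (r + 1)) ℝ}
    (hA : ∀ i k : Fin (r + 1), A i k = cos (((k : ℕ) : ℝ) * (((i : ℕ) : ℝ) * π / r)))
    (i j : Fin (r + 1)) :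
    (Aᵀ * A) i j = (nodeCosSum r ((i : ℕ) + (j : ℕ)) + nodeCosSum r ((i : ℕ) - (j : ℕ))) / 2 := by
  rw [mul_apply, nodeCosSum, nodeCosSum, ← sum_add_distrib, sum_div, sum_range]
  refine sum_congr rfl fun k _ => ?_
  simp only [transpose_apply, hA]
  push_cast
  rw [add_mul, sub_mul, cos_add, cos_sub]
  ring

lemma two_mul_dvd_add_iff_of_le {r a b : ℕ} (ha : a ≤ r) (hb : b ≤ r) :
    (2 * r : ℤ) ∣ (a + b : ℤ) ↔ a + b = 0 ∨ a + b = 2 * r := by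
  norm_cast
  constructor
  · intro hd
    rcases lt_or_ge (a + b) (2 * r) with hlt | hge
    · exact Or.inl (Nat.eq_zero_of_dvd_of_lt hd hlt)
    · right; omega
  · rintro (h | h) <;> simp [h]

lemma eq_of_two_mul_dvd_sub {r a b : ℕ} (ha : a ≤ r) (hb : b ≤ r)
    (hd : (2 * r : ℤ) ∣ (a - b : ℤ)) : a = b := by
  obtain rfl | hr := r.eq_zero_or_pos
  · omega
  have := Int.eq_zero_of_abs_lt_dvd hd (by rw [abs_sub_lt_iff]; omega)
  omega

theorem gram_matrix_even (r : ℕ) (hr : 0 < r)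
    (A : Matrix (Fin (r + 1)) (Fin (r + 1)) ℝ)
    (hA : ∀ i k : Fin (r + 1),
      A i k = Real.cos (((k : ℕ) : ℝ) * (((i : ℕ) : ℝ) * π / r))) :
    ∀ i j : Fin (r + 1), (Aᵀ * A) i j =
      if i = j then
        (if (i : ℕ) = 0 ∨ (i : ℕ) = r then (r : ℝ) + 1 else ((r : ℝ) + 2) / 2)
      else
        (if Even ((i : ℕ) + (j : ℕ)) then 1 else 0) := by
  intro i j
  have hi : (i : ℕ) ≤ r := Nat.lt_succ_iff.mp i.isLt
  have hj : (j : ℕ) ≤ r := Nat.lt_succ_iff.mp j.isLt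
  have hadd := two_mul_dvd_add_iff_of_le hi hj
  rw [transpose_mul_self_apply_eq_nodeCosSum hA]
  by_cases hij : i = j
  · subst hij
    rw [if_pos rfl, sub_self, nodeCosSum_of_dvd (dvd_zero _)]
    split_ifs with hend
    · rw [nodeCosSum_of_dvd (hadd.mpr (by omega))]
      ring
    · rw [nodeCosSum_of_not_dvd hr (by rw [hadd]; omega), if_pos (Even.add_self _)]
      ring
  · have hne : (i : ℕ) ≠ j := Fin.val_ne_of_ne hij
    have hevenAdd : Even ((i : ℤ) + j) ↔ Even ((i : ℕ) + (j : ℕ)) := by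
      exact_mod_cast Int.even_coe_nat _
    have hevenSub : Even ((i : ℤ) - j) ↔ Even ((i : ℕ) + (j : ℕ)) := by
      rw [Int.even_sub, ← Int.even_add, hevenAdd]
    rw [if_neg hij, nodeCosSum_of_not_dvd hr (by rw [hadd]; omega),
      nodeCosSum_of_not_dvd hr (mt (eq_of_two_mul_dvd_sub hi hj) hne)]
    simp only [hevenAdd, hevenSub]
    split_ifs <;> norm_num
end

section
/- Let r ≥ 1 and x_1,…,x_r be real numbers. The determinant of the r×r matrix A with entries A_{i,k} = sin(k·x_i) (k = 1,…,r) equals 2^{r(r-1)/2} · (∏_{i=1}^r sin x_i) · ∏_{1 ≤ i < j ≤ r} (cos x_j - cos x_i). -/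
/-!
Since `sin ((k + 1) x) = sin x · U_k (cos x)` for the Chebyshev polynomials `U_k` of the second
kind, `A` is `diag (sin x_i)` times the matrix `(U_k (cos x_i))`. Expanding each `U_k` in the
monomial basis writes the latter as the Vandermonde matrix of the `cos x_i` times an upper
triangular matrix whose diagonal holds the leading coefficients `2 ^ k`.
-/

open Real Finset Polynomial

theorem Matrix.det_eval_matrixOfPolynomials_eq_prod_leadingCoeff_mul {R : Type*} [CommRing R]
    {n : ℕ} (v : Fin n → R) (p : Fin n → R[X]) (h_deg : ∀ i, (p i).natDegree = i) :
    (Matrix.of fun i j => (p j).eval (v i)).det =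
      (∏ j, (p j).leadingCoeff) * (Matrix.vandermonde v).det := by
  rw [Matrix.eval_matrixOfPolynomials_eq_vandermonde_mul_matrixOfPolynomials v p
      (fun i => (h_deg i).le), Matrix.det_mul, mul_comm,
    Matrix.det_of_isUpperTriangular
      (Matrix.matrixOfPolynomials_blockTriangular p fun i => (h_deg i).le)]
  congr 1
  refine Finset.prod_congr rfl fun j _ => ?_
  rw [Matrix.of_apply, ← h_deg, coeff_natDegree]

theorem Fin.prod_pow_val {M : Type*} [CommMonoid M] (a : M) (n : ℕ) :
    ∏ k : Fin n, a ^ (k : ℕ) = a ^ (n * (n - 1) / 2) := by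
  rw [Finset.prod_pow_eq_pow_sum, Fin.sum_univ_eq_sum_range (fun k => k) n, Finset.sum_range_id]

theorem Polynomial.Chebyshev.det_eval_U_cos {n : ℕ} (x : Fin n → ℝ) :
    (Matrix.of fun i k : Fin n => (Chebyshev.U ℝ (k : ℕ)).eval (cos (x i))).det =
      2 ^ (n * (n - 1) / 2) * ∏ i, ∏ j ∈ Ioi i, (cos (x j) - cos (x i)) := by
  rw [Matrix.det_eval_matrixOfPolynomials_eq_prod_leadingCoeff_mul (fun i => cos (x i)) _
      fun k => Chebyshev.natDegree_U_natCast ℝ k, Matrix.det_vandermonde]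
  simp only [Chebyshev.leadingCoeff_U_natCast, Fin.prod_pow_val]

theorem det_sin_matrix_general (r : ℕ) (x : Fin r → ℝ)
    (A : Matrix (Fin r) (Fin r) ℝ)
    (hA : ∀ i k : Fin r, A i k = Real.sin ((((k : ℕ) : ℝ) + 1) * x i)) :
    A.det = 2 ^ (r * (r - 1) / 2) * (∏ i, Real.sin (x i)) *
      ∏ i, ∏ j ∈ Finset.univ.filter (fun j => i < j),
        (Real.cos (x j) - Real.cos (x i)) := by
  have hA_factor : A = Matrix.diagonal (fun i => sin (x i)) *
      Matrix.of fun i k : Fin r => (Chebyshev.U ℝ (k : ℕ)).eval (cos (x i)) := by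
    ext i k
    have h_sin := Chebyshev.U_real_cos (x i) (k : ℕ)
    push_cast at h_sin
    rw [Matrix.diagonal_mul, Matrix.of_apply, hA, ← h_sin, mul_comm]
  have h_filter (i : Fin r) : univ.filter (fun j => i < j) = Ioi i := by
    ext j
    simp
  rw [hA_factor, Matrix.det_mul, Matrix.det_diagonal, Chebyshev.det_eval_U_cos]
  simp only [h_filter]
  ring

theorem det_sin_matrix (r : ℕ) (hr : 0 < r) (x : Fin r → ℝ)
    (A : Matrix (Fin r) (Fin r) ℝ)
    (hA : ∀ i k : Fin r, A i k = Real.sin ((((k : ℕ) : ℝ) + 1) * x i)) :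
    A.det = 2 ^ (r * (r - 1) / 2) * (∏ i, Real.sin (x i)) *
      ∏ i, ∏ j ∈ Finset.univ.filter (fun j => i < j),
        (Real.cos (x j) - Real.cos (x i)) :=
  det_sin_matrix_general r x A hA
end

section
/- Let r ≥ 1 and x_0,…,x_r be real numbers. The determinant of the (r+1)×(r+1) matrix A with entries A_{i,k} = cos(k·x_i) (i,k = 0,…,r, with the convention cos(0·x_i) = 1) equals 2^{r(r-1)/2} · ∏_{0 ≤ i < j ≤ r} (cos x_j - cos x_i). -/
open Real Finset

/-!
Column `k` of the matrix is the Chebyshev polynomial `T_k` evaluated at the nodes `cos x_i`.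
A matrix of evaluations of polynomials `p_k` with `deg p_k = k` is the Vandermonde matrix times
the upper triangular matrix of coefficients, so its determinant is the Vandermonde determinant
times `∏ₖ lc(p_k)`. The leading coefficient of `T_k` is `2 ^ (k - 1)`, and
`∑_{k ≤ r} (k - 1) = r (r - 1) / 2`.
-/

open Polynomial

theorem Matrix.det_eval_matrixOfPolynomials {R : Type*} [CommRing R] {n : ℕ}
    (v : Fin n → R) (p : Fin n → R[X]) (h_deg : ∀ i, (p i).natDegree = i) :
    (Matrix.of fun i j => (p j).eval (v i)).det =
      (∏ i, (p i).leadingCoeff) * ∏ i, ∏ j ∈ Ioi i, (v j - v i) := by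
  rw [Matrix.eval_matrixOfPolynomials_eq_vandermonde_mul_matrixOfPolynomials v p
      (fun i ↦ (h_deg i).le), Matrix.det_mul, Matrix.det_vandermonde,
    Matrix.det_of_isUpperTriangular (Matrix.matrixOfPolynomials_blockTriangular p
      (fun i ↦ (h_deg i).le)), mul_comm]
  simp only [Matrix.of_apply, Polynomial.leadingCoeff, h_deg]

theorem Fin.sum_val_sub_one (n : ℕ) : ∑ k : Fin (n + 1), ((k : ℕ) - 1) = n * (n - 1) / 2 := by
  rw [Fin.sum_univ_eq_sum_range (· - 1), sum_range_succ', ← sum_range_id]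
  simp

theorem det_cos_matrix_general (r : ℕ) (x : Fin (r + 1) → ℝ)
    (A : Matrix (Fin (r + 1)) (Fin (r + 1)) ℝ)
    (hA : ∀ i k : Fin (r + 1), A i k = Real.cos (((k : ℕ) : ℝ) * x i)) :
    A.det = 2 ^ (r * (r - 1) / 2) *
      ∏ i, ∏ j ∈ Finset.univ.filter (fun j => i < j),
        (Real.cos (x j) - Real.cos (x i)) := by
  have hA_cheb :
      A = Matrix.of fun i (k : Fin (r + 1)) => (Chebyshev.T ℝ (k : ℕ)).eval (cos (x i)) := by
    ext i k
    simp [hA, Chebyshev.T_real_cos]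
  rw [hA_cheb, Matrix.det_eval_matrixOfPolynomials _ _ (fun k ↦ by simp)]
  simp only [Chebyshev.leadingCoeff_T, Int.natAbs_natCast, prod_pow_eq_pow_sum,
    Fin.sum_val_sub_one, filter_lt_eq_Ioi]

theorem det_cos_matrix (r : ℕ) (hr : 0 < r) (x : Fin (r + 1) → ℝ)
    (A : Matrix (Fin (r + 1)) (Fin (r + 1)) ℝ)
    (hA : ∀ i k : Fin (r + 1), A i k = Real.cos (((k : ℕ) : ℝ) * x i)) :
    A.det = 2 ^ (r * (r - 1) / 2) *
      ∏ i, ∏ j ∈ Finset.univ.filter (fun j => i < j),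
        (Real.cos (x j) - Real.cos (x i)) :=
  det_cos_matrix_general r x A hA
end

section
/- Let r ≥ 1 and x_1,…,x_r ∈ ℝ. The matrix A with entries A_{i,k} = sin(k·x_i) (i,k = 1,…,r) is invertible if and only if sin x_i ≠ 0 for all i and the values cos x_1,…,cos x_r are pairwise distinct. -/
/-!
Since `sin ((k + 1) x) = U_k(cos x) sin x` for the Chebyshev polynomials `U_k` of the second
kind, `A` is the diagonal matrix of the `sin x_i` times the matrix `(U_k(cos x_i))`. The latter is
the Vandermonde matrix of the `cos x_i` times the upper triangular matrix of coefficients of the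
`U_k`, whose diagonal entries are the leading coefficients `2 ^ k ≠ 0`.
-/

open Real Finset Polynomial

namespace Matrix

theorem det_eval_matrixOfPolynomials_eq_prod_leadingCoeff_mul_det_vandermonde
    {R : Type*} [CommRing R] {n : ℕ} (v : Fin n → R) (p : Fin n → R[X])
    (h_deg : ∀ i, (p i).natDegree = i) :
    (of fun i j => (p j).eval (v i)).det = (∏ i, (p i).leadingCoeff) * (vandermonde v).det := by
  rw [eval_matrixOfPolynomials_eq_vandermonde_mul_matrixOfPolynomials v p (fun i ↦ (h_deg i).le),
    det_mul, det_of_isUpperTriangular (matrixOfPolynomials_blockTriangular p (fun i ↦ (h_deg i).le)),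
    mul_comm]
  congr 1
  refine prod_congr rfl fun i _ => ?_
  rw [of_apply, leadingCoeff, h_deg]

theorem det_eval_chebyshevU_eq_mul_det_vandermonde {R : Type*} [CommRing R] [IsDomain R]
    [NeZero (2 : R)] {n : ℕ} (v : Fin n → R) :
    (of fun i j : Fin n => (Chebyshev.U R (j : ℕ)).eval (v i)).det =
      (∏ j : Fin n, 2 ^ (j : ℕ)) * (vandermonde v).det := by
  rw [det_eval_matrixOfPolynomials_eq_prod_leadingCoeff_mul_det_vandermonde v _
    fun i => Chebyshev.natDegree_U_natCast R i]
  simp only [Chebyshev.leadingCoeff_U_natCast]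

theorem of_sin_nat_succ_mul_eq_diagonal_mul {r : ℕ} (x : Fin r → ℝ) :
    of (fun i k : Fin r => sin (((k : ℕ) + 1) * x i)) =
      diagonal (fun i => sin (x i)) *
        of fun i (k : Fin r) => (Chebyshev.U ℝ (k : ℕ)).eval (cos (x i)) := by
  ext i k
  rw [diagonal_mul, of_apply, of_apply, mul_comm (sin _), Chebyshev.U_real_cos]
  norm_cast

end Matrix

theorem sin_matrix_invertible_iff_general (r : ℕ) (x : Fin r → ℝ)
    (A : Matrix (Fin r) (Fin r) ℝ)
    (hA : ∀ i k : Fin r, A i k = Real.sin ((((k : ℕ) : ℝ) + 1) * x i)) :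
    IsUnit A ↔
      ((∀ i, Real.sin (x i) ≠ 0) ∧
        ∀ i j, i ≠ j → Real.cos (x i) ≠ Real.cos (x j)) := by
  have hA' : A = Matrix.of fun i k : Fin r => sin (((k : ℕ) + 1) * x i) := Matrix.ext hA
  have hdet : A.det = (∏ i, sin (x i)) *
      ((∏ j : Fin r, (2 : ℝ) ^ (j : ℕ)) * (Matrix.vandermonde fun i => cos (x i)).det) := by
    rw [hA', Matrix.of_sin_nat_succ_mul_eq_diagonal_mul, Matrix.det_mul, Matrix.det_diagonal,
      Matrix.det_eval_chebyshevU_eq_mul_det_vandermonde]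
  have hpow : ∏ j : Fin r, (2 : ℝ) ^ (j : ℕ) ≠ 0 := prod_ne_zero_iff.mpr fun _ _ => by positivity
  rw [Matrix.isUnit_iff_isUnit_det, isUnit_iff_ne_zero, hdet, mul_ne_zero_iff, mul_ne_zero_iff,
    and_iff_right hpow, prod_ne_zero_iff, Matrix.det_vandermonde_ne_zero_iff,
    Function.injective_iff_pairwise_ne]
  simp only [mem_univ, true_implies]
  rfl

theorem sin_matrix_invertible_iff (r : ℕ) (hr : 0 < r) (x : Fin r → ℝ)
    (A : Matrix (Fin r) (Fin r) ℝ)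
    (hA : ∀ i k : Fin r, A i k = Real.sin ((((k : ℕ) : ℝ) + 1) * x i)) :
    IsUnit A ↔
      ((∀ i, Real.sin (x i) ≠ 0) ∧
        ∀ i j, i ≠ j → Real.cos (x i) ≠ Real.cos (x j)) :=
  sin_matrix_invertible_iff_general r x A hA
end

section
/- Let r ≥ 1 and x_0,…,x_r ∈ ℝ. The matrix A with entries A_{i,k} = cos(k·x_i) (i,k = 0,…,r) is invertible if and only if the values cos x_0, cos x_1,…,cos x_r are pairwise distinct. -/
/-!
By `cos (k θ) = Tₖ (cos θ)`, the columns of `A` are the Chebyshev polynomials `T₀, …, T_r`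
evaluated at the nodes `cos xᵢ`. Since `Tₖ` has degree `k` and leading coefficient `2 ^ (k - 1)`,
`A` is the Vandermonde matrix of the nodes times an invertible upper-triangular matrix of
coefficients, so it is invertible exactly when the nodes are distinct.
-/

open Real Finset Polynomial

namespace Matrix

theorem det_eval_matrixOfPolynomials_s8 {R : Type*} [CommRing R] {n : ℕ} (v : Fin n → R)
    (p : Fin n → R[X]) (h_deg : ∀ i, (p i).natDegree = i) :
    (of fun i j => (p j).eval (v i)).det = (vandermonde v).det * ∏ j, (p j).leadingCoeff := by
  rw [eval_matrixOfPolynomials_eq_vandermonde_mul_matrixOfPolynomials v p (fun i ↦ (h_deg i).le),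
    det_mul,
    det_of_isUpperTriangular (matrixOfPolynomials_blockTriangular p fun i ↦ (h_deg i).le)]
  congr 1
  refine prod_congr rfl fun j _ => ?_
  rw [of_apply, ← h_deg j, coeff_natDegree]

theorem isUnit_eval_matrixOfPolynomials_iff {K : Type*} [Field K] {n : ℕ} (v : Fin n → K)
    (p : Fin n → K[X]) (h_deg : ∀ i, (p i).natDegree = i) (h_ne : ∀ i, p i ≠ 0) :
    IsUnit (of fun i j => (p j).eval (v i)) ↔ Function.Injective v := by
  have h_lead : ∏ j, (p j).leadingCoeff ≠ 0 :=
    prod_ne_zero_iff.mpr fun j _ => leadingCoeff_ne_zero.mpr (h_ne j)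
  rw [isUnit_iff_isUnit_det, isUnit_iff_ne_zero, det_eval_matrixOfPolynomials_s8 v p h_deg,
    mul_ne_zero_iff, and_iff_left h_lead, det_vandermonde_ne_zero_iff]

end Matrix

theorem cos_matrix_invertible_iff_general (r : ℕ) (x : Fin (r + 1) → ℝ)
    (A : Matrix (Fin (r + 1)) (Fin (r + 1)) ℝ)
    (hA : ∀ i k : Fin (r + 1), A i k = Real.cos (((k : ℕ) : ℝ) * x i)) :
    IsUnit A ↔ ∀ i j, i ≠ j → Real.cos (x i) ≠ Real.cos (x j) := by
  have hA_cheb :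
      A = Matrix.of fun i (k : Fin (r + 1)) => (Chebyshev.T ℝ (k : ℕ)).eval (cos (x i)) := by
    ext i k
    rw [hA, Matrix.of_apply, Chebyshev.T_real_cos, Int.cast_natCast]
  have h_deg (k : Fin (r + 1)) : (Chebyshev.T ℝ (k : ℕ)).natDegree = k := by
    rw [Chebyshev.natDegree_T, Int.natAbs_natCast]
  have h_ne (k : Fin (r + 1)) : Chebyshev.T ℝ (k : ℕ) ≠ 0 := by
    rw [← leadingCoeff_ne_zero, Chebyshev.leadingCoeff_T]
    exact pow_ne_zero _ two_ne_zero
  rw [hA_cheb, Matrix.isUnit_eval_matrixOfPolynomials_iff _ _ h_deg h_ne,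
    Function.injective_iff_pairwise_ne]
  rfl

theorem cos_matrix_invertible_iff (r : ℕ) (hr : 0 < r) (x : Fin (r + 1) → ℝ)
    (A : Matrix (Fin (r + 1)) (Fin (r + 1)) ℝ)
    (hA : ∀ i k : Fin (r + 1), A i k = Real.cos (((k : ℕ) : ℝ) * x i)) :
    IsUnit A ↔ ∀ i j, i ≠ j → Real.cos (x i) ≠ Real.cos (x j) :=
  cos_matrix_invertible_iff_general r x A hA
end

section
/- For every positive integer r, (1/(2r)) · Σ_{i=1}^r csc²((2i-1)π/(4r)) = r, i.e., Σ_{i=1}^r 1/sin²((2i-1)π/(4r)) = 2r². -/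
/-!
The numbers `cos ((2k+1)π/(2r))`, `k < r`, are exactly the `r` simple roots of the Chebyshev
polynomial `T_r`, so the sum of `1 / (1 - x)` over them is the logarithmic derivative
`T_r'(1) / T_r(1) = r²`. The half-angle formula `1 / sin² (θ/2) = 2 / (1 - cos θ)` turns the
cosecant sum into twice this sum.
-/

open Real Finset Polynomial Polynomial.Chebyshev

theorem Polynomial.Chebyshev.splits_T_real (n : ℕ) : (T ℝ n).Splits := by
  rw [splits_iff_card_roots, roots_T_real, natDegree_T, Int.natAbs_natCast, ← Finset.card_def,
    Finset.card_image_of_injOn ((range n).nodup_map_iff_injOn.mp (roots_T_real_nodup n)),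
    card_range]

theorem Polynomial.Chebyshev.sum_one_div_one_sub_roots_T_real (n : ℕ) :
    ∑ k ∈ range n, 1 / (1 - cos ((2 * k + 1) * π / (2 * n))) = (n : ℝ) ^ 2 := by
  have hroots : (T ℝ n).roots = (range n).val.map fun k : ℕ ↦ cos ((2 * k + 1) * π / (2 * n)) := by
    rw [roots_T_real, Finset.image_val]
    exact Multiset.dedup_eq_self.mpr (roots_T_real_nodup n)
  have h := (splits_T_real n).eval_derivative_div_eval_of_ne_zero (x := 1) (by simp [T_eval_one])
  rw [derivative_T_eval_one, T_eval_one, div_one, hroots, Multiset.map_map] at h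
  exact_mod_cast h.symm

theorem Real.one_div_sin_half_sq (θ : ℝ) : 1 / sin (θ / 2) ^ 2 = 2 / (1 - cos θ) := by
  rw [sin_sq_eq_half_sub, mul_div_cancel₀ θ two_ne_zero,
    show 1 / 2 - cos θ / 2 = (1 - cos θ) / 2 by ring, one_div_div]

theorem csc_sq_sum_eq_general (r : ℕ) :
    ∑ i ∈ Finset.range r, 1 / Real.sin ((2 * (i : ℝ) + 1) * π / (4 * r)) ^ 2
      = 2 * (r : ℝ) ^ 2 := by
  have half_angle (i : ℕ) :
      (2 * (i : ℝ) + 1) * π / (4 * r) = (2 * i + 1) * π / (2 * r) / 2 := by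
    rw [div_div]; ring_nf
  simp_rw [half_angle, one_div_sin_half_sq, div_eq_mul_one_div (2 : ℝ), ← mul_sum,
    sum_one_div_one_sub_roots_T_real]

theorem csc_sq_sum_eq (r : ℕ) (hr : 0 < r) :
    ∑ i ∈ Finset.range r, 1 / Real.sin ((2 * (i : ℝ) + 1) * π / (4 * r)) ^ 2
      = 2 * (r : ℝ) ^ 2 :=
  csc_sq_sum_eq_general r
end

section
/- For every positive integer r, Σ_{i=1}^{r-1} 1/sin²(iπ/(2r)) = 2(r²-1)/3. -/
/-!
Let `ζ` be a primitive `n`-th root of unity. For `1 ≤ k < n` one has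
`∑_{j<n} j ζ^{jk} = n / (ζ^k - 1)`, and `(1 - ζ^k)(1 - ζ^{-k}) = 4 sin²(kπ/n)`. Parseval's
identity for the sequence `j ↦ j` therefore reads
`n ∑ j² = (∑ j)² + n² ∑_{k=1}^{n-1} 1 / (4 sin²(kπ/n))`, whence
`∑_{k=1}^{n-1} csc²(kπ/n) = (n² - 1)/3`. For `n = 2r` the terms `k` and `2r - k` agree and the
middle term `k = r` equals `1`, which halves the sum to `2(r² - 1)/3`.
-/

open Real Finset

section CommRing

variable {R : Type*} [CommRing R]

theorem sum_range_cast_mul_two (n : ℕ) : (∑ j ∈ range n, (j : R)) * 2 = n * (n - 1) := by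
  induction n with
  | zero => simp
  | succ n ih => rw [sum_range_succ, add_mul, ih]; push_cast; ring

theorem sum_range_cast_sq_mul_six (n : ℕ) :
    (∑ j ∈ range n, (j : R) ^ 2) * 6 = n * (n - 1) * (2 * n - 1) := by
  induction n with
  | zero => simp
  | succ n ih => rw [sum_range_succ, add_mul, ih]; push_cast; ring

theorem one_sub_sq_mul_sum_range_mul_pow (n : ℕ) (z : R) :
    (1 - z) ^ 2 * ∑ j ∈ range n, (j : R) * z ^ j = z - n * z ^ n + (n - 1) * z ^ (n + 1) := by
  induction n with
  | zero => simp
  | succ n ih => rw [sum_range_succ, mul_add, ih]; push_cast; ring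

end CommRing

section Field

variable {K : Type*} [Field K]

theorem sum_range_mul_pow_of_pow_eq_one {n : ℕ} {z : K} (hz : z ≠ 1) (hzn : z ^ n = 1) :
    ∑ j ∈ range n, (j : K) * z ^ j = n / (z - 1) := by
  have hz' : z - 1 ≠ 0 := sub_ne_zero.mpr hz
  have h := one_sub_sq_mul_sum_range_mul_pow n z
  rw [eq_div_iff hz']
  refine mul_left_cancel₀ hz' ?_
  linear_combination h - (n - (n - 1) * z) * hzn

theorem IsPrimitiveRoot.sum_range_pow_mul_inv_pow {ζ : K} {n : ℕ} (hζ : IsPrimitiveRoot ζ n)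
    {j l : ℕ} (hj : j < n) (hl : l < n) :
    ∑ k ∈ range n, (ζ ^ j * (ζ ^ l)⁻¹) ^ k = if j = l then (n : K) else 0 := by
  have hζ0 : ζ ≠ 0 := hζ.ne_zero (by omega)
  split_ifs with hjl
  · simp [hjl, hζ0]
  · have hw : ζ ^ j * (ζ ^ l)⁻¹ ≠ 1 := by
      rw [Ne, mul_inv_eq_one₀ (pow_ne_zero _ hζ0)]
      exact fun h => hjl (hζ.pow_inj hj hl h)
    rw [geom_sum_eq hw, mul_pow, inv_pow, ← pow_mul, ← pow_mul, mul_comm j, mul_comm l,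
      pow_mul, pow_mul, hζ.pow_eq_one]
    simp

-- Parseval's identity for the discrete Fourier transform.
theorem IsPrimitiveRoot.sum_range_mul_sum_range_inv {ζ : K} {n : ℕ} (hζ : IsPrimitiveRoot ζ n)
    (a b : ℕ → K) :
    ∑ k ∈ range n, (∑ j ∈ range n, a j * (ζ ^ k) ^ j) * (∑ l ∈ range n, b l * ((ζ ^ k)⁻¹) ^ l)
      = n * ∑ j ∈ range n, a j * b j := by
  calc _ = ∑ j ∈ range n, ∑ l ∈ range n, a j * b l * ∑ k ∈ range n, (ζ ^ j * (ζ ^ l)⁻¹) ^ k := by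
        simp_rw [sum_mul_sum, mul_sum]
        rw [sum_comm]
        refine sum_congr rfl fun j _ => ?_
        rw [sum_comm]
        refine sum_congr rfl fun l _ => sum_congr rfl fun k _ => ?_
        simp only [mul_pow, inv_pow, ← pow_mul, mul_comm k]
        ring
    _ = n * ∑ j ∈ range n, a j * b j := by
        rw [mul_sum]
        refine sum_congr rfl fun j hj => ?_
        rw [sum_congr rfl fun l hl =>
          by rw [hζ.sum_range_pow_mul_inv_pow (mem_range.mp hj) (mem_range.mp hl)]]
        simp [mul_ite, hj, mul_comm]

end Field

theorem IsPrimitiveRoot.sum_Ico_inv_one_sub_mul_one_sub_inv {K : Type*} [Field K] [CharZero K]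
    {ζ : K} {n : ℕ} (hζ : IsPrimitiveRoot ζ n) (hn : 0 < n) :
    ∑ k ∈ Ico 1 n, ((1 - ζ ^ k) * (1 - (ζ ^ k)⁻¹))⁻¹ = ((n : K) ^ 2 - 1) / 12 := by
  have hn' : (n : K) ≠ 0 := by exact_mod_cast hn.ne'
  have hterm : ∀ k ∈ Ico 1 n,
      (∑ j ∈ range n, (j : K) * (ζ ^ k) ^ j) * (∑ l ∈ range n, (l : K) * ((ζ ^ k)⁻¹) ^ l)
        = n ^ 2 * ((1 - ζ ^ k) * (1 - (ζ ^ k)⁻¹))⁻¹ := by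
    intro k hk
    obtain ⟨hk1, hkn⟩ := mem_Ico.mp hk
    have hz : ζ ^ k ≠ 1 := hζ.pow_ne_one_of_pos_of_lt (by omega) hkn
    have hzn : (ζ ^ k) ^ n = 1 := by rw [← pow_mul, mul_comm, pow_mul, hζ.pow_eq_one, one_pow]
    rw [sum_range_mul_pow_of_pow_eq_one hz hzn,
      sum_range_mul_pow_of_pow_eq_one (inv_ne_one.mpr hz) (by rw [inv_pow, hzn, inv_one])]
    rw [div_mul_div_comm, ← sq, div_eq_mul_inv, ← neg_sub 1 (ζ ^ k), ← neg_sub 1 (ζ ^ k)⁻¹,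
      neg_mul_neg]
  have hparseval := hζ.sum_range_mul_sum_range_inv (fun j => (j : K)) (fun j => (j : K))
  rw [sum_range_eq_add_Ico _ hn, sum_congr rfl hterm, ← mul_sum] at hparseval
  simp only [pow_zero, one_pow, inv_one, mul_one, ← sq] at hparseval
  have h1 := sum_range_cast_mul_two (R := K) n
  have h2 := sum_range_cast_sq_mul_six (R := K) n
  rw [eq_div_iff (by norm_num)]
  refine mul_left_cancel₀ (pow_ne_zero 2 hn') ?_
  linear_combination 12 * hparseval + 2 * n * h2
    - 3 * ((∑ j ∈ range n, (j : K)) * 2 + n * (n - 1)) * h1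

theorem Complex.one_sub_exp_mul_one_sub_exp_inv (x : ℂ) :
    (1 - exp (2 * x * I)) * (1 - (exp (2 * x * I))⁻¹) = 4 * sin x ^ 2 := by
  have hcos := two_cos (2 * x)
  have hinv : exp (2 * x * I) * exp (-(2 * x) * I) = 1 := by rw [← exp_add]; simp
  rw [← exp_neg, ← neg_mul]
  linear_combination hinv + hcos - 2 * cos_two_mul' x - 2 * sin_sq_add_cos_sq x

theorem sum_Ico_one_div_sin_sq (n : ℕ) (hn : 0 < n) :
    ∑ k ∈ Ico 1 n, 1 / sin (k * π / n) ^ 2 = ((n : ℝ) ^ 2 - 1) / 3 := by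
  have hζ := Complex.isPrimitiveRoot_exp n hn.ne'
  have hterm : ∀ k ∈ Ico 1 n,
      ((1 - Complex.exp (2 * π * Complex.I / n) ^ k) *
        (1 - (Complex.exp (2 * π * Complex.I / n) ^ k)⁻¹))⁻¹
        = ((1 / sin (k * π / n) ^ 2 / 4 : ℝ) : ℂ) := by
    intro k _
    rw [← Complex.exp_nat_mul, show (k : ℂ) * (2 * π * Complex.I / n)
        = 2 * ((k * π / n : ℝ) : ℂ) * Complex.I by push_cast; ring,
      Complex.one_sub_exp_mul_one_sub_exp_inv]
    push_cast
    ring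
  have h := hζ.sum_Ico_inv_one_sub_mul_one_sub_inv hn
  rw [sum_congr rfl hterm, ← Complex.ofReal_sum] at h
  have h' : ∑ k ∈ Ico 1 n, 1 / sin (k * π / n) ^ 2 / 4 = ((n : ℝ) ^ 2 - 1) / 12 := by
    exact_mod_cast h
  rw [← sum_div] at h'
  linarith

theorem sum_Ico_one_two_mul_of_reflect {M : Type*} [AddCommMonoid M] (f : ℕ → M) {r : ℕ}
    (hr : 0 < r) (hf : ∀ k ∈ Ico 1 r, f (2 * r - k) = f k) :
    ∑ k ∈ Ico 1 (2 * r), f k = 2 • ∑ k ∈ Ico 1 r, f k + f r := by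
  have hupper : ∑ k ∈ Ico (r + 1) (2 * r), f k = ∑ k ∈ Ico 1 r, f k := by
    rw [← sum_congr rfl hf, sum_Ico_reflect f 1 (by omega)]
    congr 2; omega
  rw [← sum_Ico_consecutive f hr (by omega : r ≤ 2 * r),
    sum_eq_sum_Ico_succ_bot (by omega : r < 2 * r), hupper]
  abel

theorem csc_sq_sum_eq_second (r : ℕ) (hr : 0 < r) :
    ∑ i ∈ Finset.Ico 1 r, 1 / Real.sin ((i : ℝ) * π / (2 * r)) ^ 2
      = 2 * ((r : ℝ) ^ 2 - 1) / 3 := by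
  have hsum := sum_Ico_one_div_sin_sq (2 * r) (by omega)
  rw [sum_Ico_one_two_mul_of_reflect _ hr fun k hk => ?reflect] at hsum
  case reflect =>
    rw [Nat.cast_sub (by linarith [(mem_Ico.mp hk).2]), ← sin_pi_sub]
    push_cast
    congr 3
    field_simp
    ring
  rw [show (r : ℝ) * π / ((2 * r : ℕ) : ℝ) = π / 2 by push_cast; field_simp, sin_pi_div_two] at hsum
  push_cast at hsum
  rw [two_nsmul, one_pow, div_one] at hsum
  linarith
end

section
/- For every positive integer r and every integer i with 1 ≤ i ≤ r-1, -(2/r)·Σ_{k=1}^{r-1} k²·cos(kiπ/r) - r·cos(iπ) = (-1)^{i-1}/sin²(iπ/(2r)). -/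
open Real Finset

/-!
With `z = exp (iθ)`, the power sum `∑_{k<n} k² zᵏ` has a closed form with denominator `(z - 1)³`
(a twice-differentiated geometric series). When `sin (nθ) = 0` we have `zⁿ = z⁻ⁿ = cos (nθ)`, and
adding the closed forms for `z` and `z⁻¹` evaluates `(z - 1)² / z · 2 ∑ k² cos (kθ)`, where
`(z - 1)² / z = 2 cos θ - 2 = -4 sin² (θ/2)`. For `θ = iπ/r` we get `cos (rθ) = (-1)ⁱ`.
-/

theorem sub_one_pow_three_mul_sum_range_sq_mul_pow {R : Type*} [CommRing R] (z : R) (n : ℕ) :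
    (z - 1) ^ 3 * ∑ k ∈ range n, (k : R) ^ 2 * z ^ k
      = z ^ n * ((n - 1) ^ 2 * z ^ 2 - (2 * n ^ 2 - 2 * n - 1) * z + n ^ 2) - z ^ 2 - z := by
  induction n with
  | zero => simp
  | succ n ih =>
    rw [sum_range_succ, mul_add, ih, pow_succ]
    push_cast
    ring

theorem sub_one_pow_three_mul_sum_range_sq_mul_inv_pow {K : Type*} [Field K] {z : K}
    (hz : z ≠ 0) (n : ℕ) :
    (z - 1) ^ 3 * ∑ k ∈ range n, (k : K) ^ 2 * z⁻¹ ^ k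
      = z + z ^ 2
        - z⁻¹ ^ n * ((n - 1) ^ 2 * z - (2 * n ^ 2 - 2 * n - 1) * z ^ 2 + n ^ 2 * z ^ 3) := by
  have h := sub_one_pow_three_mul_sum_range_sq_mul_pow z⁻¹ n
  have hz3 : (z - 1) ^ 3 = -z ^ 3 * (z⁻¹ - 1) ^ 3 := by field_simp; ring
  rw [hz3, mul_assoc, h]
  field_simp
  ring

theorem sub_one_sq_mul_sum_range_sq_mul_pow_add_inv_pow {K : Type*} [Field K] {z : K}
    (hz : z ≠ 0) (hz1 : z ≠ 1) {n : ℕ} (hn : z⁻¹ ^ n = z ^ n) :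
    (z - 1) ^ 2 * ∑ k ∈ range n, (k : K) ^ 2 * (z ^ k + z⁻¹ ^ k)
      = z ^ n * (-n ^ 2 * z ^ 2 + (2 * n ^ 2 - 4 * n) * z - n ^ 2) := by
  have h := sub_one_pow_three_mul_sum_range_sq_mul_pow z n
  have h' := sub_one_pow_three_mul_sum_range_sq_mul_inv_pow hz n
  rw [hn] at h'
  refine mul_left_cancel₀ (sub_ne_zero.2 hz1) ?_
  simp only [mul_add, sum_add_distrib]
  linear_combination h + h'

theorem Complex.cos_sub_one_mul_sum_range_sq_mul_cos {θ : ℂ} (n : ℕ) (hθ : cos θ ≠ 1)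
    (hn : sin (n * θ) = 0) :
    2 * (cos θ - 1) * ∑ k ∈ range n, (k : ℂ) ^ 2 * cos (k * θ)
      = cos (n * θ) * (n ^ 2 * (1 - cos θ) - 2 * n) := by
  set z := exp (θ * I)
  have hz : z ≠ 0 := exp_ne_zero _
  have two_cos_nat_mul (k : ℕ) : 2 * cos (k * θ) = z ^ k + z⁻¹ ^ k := by
    rw [two_cos, ← exp_neg, ← exp_nat_mul, ← exp_nat_mul]
    ring_nf
  have two_cos_eq : 2 * cos θ = z + z⁻¹ := by simpa using two_cos_nat_mul 1
  have hz1 : z ≠ 1 := by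
    rintro h
    rw [h, inv_one] at two_cos_eq
    exact hθ (by linear_combination two_cos_eq / 2)
  have hzn : z ^ n = cos (n * θ) := by
    rw [← exp_nat_mul, ← mul_assoc, exp_mul_I, hn, zero_mul, add_zero]
  have hzn' : z⁻¹ ^ n = cos (n * θ) := by
    rw [← exp_neg, ← exp_nat_mul, show (n : ℂ) * -(θ * I) = -(n * θ) * I by ring, exp_mul_I,
      cos_neg, sin_neg, hn, neg_zero, zero_mul, add_zero]
  have hsum : ∑ k ∈ range n, (k : ℂ) ^ 2 * (z ^ k + z⁻¹ ^ k)
      = 2 * ∑ k ∈ range n, (k : ℂ) ^ 2 * cos (k * θ) := by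
    rw [mul_sum]
    refine sum_congr rfl fun k _ => ?_
    rw [← two_cos_nat_mul]
    ring
  have hz2 : z ^ 2 + 1 = 2 * cos θ * z := by
    rw [two_cos_eq]
    field_simp
  have key := sub_one_sq_mul_sum_range_sq_mul_pow_add_inv_pow hz hz1 (hzn'.trans hzn.symm)
  rw [hsum, hzn] at key
  refine mul_left_cancel₀ (mul_ne_zero two_ne_zero hz) ?_
  linear_combination
    key - (2 * ∑ k ∈ range n, (k : ℂ) ^ 2 * cos (k * θ) + cos (n * θ) * n ^ 2) * hz2

theorem Real.sum_range_sq_mul_cos_eq {θ : ℝ} (n : ℕ) (hθ : sin (θ / 2) ≠ 0)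
    (hn : sin (n * θ) = 0) :
    ∑ k ∈ range n, (k : ℝ) ^ 2 * cos (k * θ)
      = cos (n * θ) * (n - n ^ 2 * sin (θ / 2) ^ 2) / (2 * sin (θ / 2) ^ 2) := by
  have hcos : cos θ = 1 - 2 * sin (θ / 2) ^ 2 := by
    rw [← cos_two_mul_eq_one_sub, mul_div_cancel₀ _ two_ne_zero]
  have hcos1 : cos θ ≠ 1 := by rw [hcos]; simpa using hθ
  have h : 2 * (cos θ - 1) * ∑ k ∈ range n, (k : ℝ) ^ 2 * cos (k * θ)
      = cos (n * θ) * (n ^ 2 * (1 - cos θ) - 2 * n) := by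
    exact_mod_cast Complex.cos_sub_one_mul_sum_range_sq_mul_cos (θ := θ) n
      (by exact_mod_cast hcos1) (by exact_mod_cast hn)
  rw [hcos] at h
  rw [eq_div_iff (mul_ne_zero two_ne_zero (pow_ne_zero 2 hθ))]
  linear_combination -h / 2

theorem cos_sum_identity_general (r i : ℕ) (hi1 : 1 ≤ i) (hir : i ≤ r - 1) :
    -(2 / (r : ℝ)) * ∑ k ∈ Finset.Ico 1 r, (k : ℝ) ^ 2 * Real.cos (k * i * π / r)
        - r * Real.cos (i * π)
      = (-1 : ℝ) ^ (i - 1) / Real.sin (i * π / (2 * r)) ^ 2 := by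
  have hr : (0 : ℝ) < r := by exact_mod_cast (by omega : 0 < r)
  have hir' : (i : ℝ) < r := by exact_mod_cast (by omega : i < r)
  have hhalf : i * π / r / 2 = i * π / (2 * r) := by ring
  have hrθ : r * (i * π / r) = i * π := by field_simp
  have hsin : 0 < sin (i * π / (2 * r)) := by
    apply sin_pos_of_pos_of_lt_pi (by positivity)
    rw [div_lt_iff₀ (by positivity)]
    nlinarith [pi_pos]
  have key := Real.sum_range_sq_mul_cos_eq (θ := i * π / r) r (by rw [hhalf]; exact hsin.ne')
    (by rw [hrθ, sin_nat_mul_pi])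
  rw [hhalf, hrθ, cos_nat_mul_pi, sum_range_eq_add_Ico _ (by omega)] at key
  simp only [Nat.cast_zero, zero_pow two_ne_zero, zero_mul, zero_add, ← mul_assoc,
    ← mul_div_assoc] at key
  obtain ⟨j, rfl⟩ := Nat.exists_eq_add_of_le' hi1
  rw [key, cos_nat_mul_pi, Nat.add_sub_cancel]
  field_simp
  ring

theorem cos_sum_identity (r i : ℕ) (hr : 0 < r) (hi1 : 1 ≤ i) (hir : i ≤ r - 1) :
    -(2 / (r : ℝ)) * ∑ k ∈ Finset.Ico 1 r, (k : ℝ) ^ 2 * Real.cos (k * i * π / r)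
        - r * Real.cos (i * π)
      = (-1 : ℝ) ^ (i - 1) / Real.sin (i * π / (2 * r)) ^ 2 :=
  cos_sum_identity_general r i hi1 hir
end

section
/- Let Ω_1 < … < Ω_r be positive reals, and let f(x) = a_0 + Σ_{k=1}^r (a_k cos(Ω_k x) + b_k sin(Ω_k x)) with real coefficients. Let d be an odd positive integer, let x_1,…,x_r ∈ ℝ be such that the r×r matrix A with A_{i,k} = sin(Ω_k x_i) is invertible, and let c ∈ ℝ^r solve Aᵀ c = p where p_k = (-1)^{(d-1)/2} Ω_k^d. Then for every x̄ ∈ ℝ, f^{(d)}(x̄) = (1/2)·Σ_{i=1}^r c_i·(f(x̄ + x_i) - f(x̄ - x_i)). -/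
open Real Finset Matrix

/-!
The odd derivatives of `f` are again trigonometric polynomials, with only the "odd part"
`g k = b k cos(Ω k x̄) - a k sin(Ω k x̄)` surviving: `f^{(2m+1)}(x̄) = ∑ₖ (-1)^m Ω_k^{2m+1} g k`.
On the other hand the addition formulas give `f(x̄ + xᵢ) - f(x̄ - xᵢ) = 2 (A g)ᵢ`, so the right-hand
side is `c ⬝ (A g) = (Aᵀ c) ⬝ g = p ⬝ g`, which is the same sum.
-/

section TrigPoly

variable {ι : Type*} [Fintype ι]

noncomputable def trigPoly (a0 : ℝ) (Ω a b : ι → ℝ) (t : ℝ) : ℝ :=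
  a0 + ∑ k, (a k * cos (Ω k * t) + b k * sin (Ω k * t))

theorem hasDerivAt_trigPoly (a0 : ℝ) (Ω a b : ι → ℝ) (t : ℝ) :
    HasDerivAt (trigPoly a0 Ω a b)
      (trigPoly 0 Ω (fun k => Ω k * b k) (fun k => -(Ω k * a k)) t) t := by
  unfold trigPoly
  rw [zero_add]
  refine (HasDerivAt.fun_sum fun k _ => ?_).const_add a0
  have hlin : HasDerivAt (fun t => Ω k * t) (Ω k) t := by
    simpa using (hasDerivAt_id t).const_mul (Ω k)
  convert (hlin.cos.const_mul (a k)).fun_add (hlin.sin.const_mul (b k)) using 1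
  ring

theorem deriv_trigPoly (a0 : ℝ) (Ω a b : ι → ℝ) :
    deriv (trigPoly a0 Ω a b) = trigPoly 0 Ω (fun k => Ω k * b k) (fun k => -(Ω k * a k)) :=
  funext fun t => (hasDerivAt_trigPoly a0 Ω a b t).deriv

theorem iteratedDeriv_two_mul_trigPoly (Ω a b : ι → ℝ) (m : ℕ) :
    iteratedDeriv (2 * m) (trigPoly 0 Ω a b) =
      trigPoly 0 Ω (fun k => (-Ω k ^ 2) ^ m * a k) (fun k => (-Ω k ^ 2) ^ m * b k) := by
  induction m generalizing a b with
  | zero => simp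
  | succ m ih =>
    rw [show 2 * (m + 1) = 2 * m + 1 + 1 by ring, iteratedDeriv_succ', iteratedDeriv_succ',
      deriv_trigPoly, deriv_trigPoly, ih]
    congr 1 <;> funext k <;> ring

theorem iteratedDeriv_two_mul_add_one_trigPoly (a0 : ℝ) (Ω a b : ι → ℝ) (m : ℕ) (t : ℝ) :
    iteratedDeriv (2 * m + 1) (trigPoly a0 Ω a b) t =
      ∑ k, (-1) ^ m * Ω k ^ (2 * m + 1) * (b k * cos (Ω k * t) - a k * sin (Ω k * t)) := by
  rw [iteratedDeriv_succ', deriv_trigPoly, iteratedDeriv_two_mul_trigPoly, trigPoly, zero_add]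
  refine sum_congr rfl fun k _ => ?_
  rw [neg_pow, ← pow_mul, pow_succ]
  ring

theorem trigPoly_add_sub_trigPoly_sub (a0 : ℝ) (Ω a b : ι → ℝ) (t s : ℝ) :
    trigPoly a0 Ω a b (t + s) - trigPoly a0 Ω a b (t - s) =
      2 * ∑ k, sin (Ω k * s) * (b k * cos (Ω k * t) - a k * sin (Ω k * t)) := by
  simp only [trigPoly, add_sub_add_left_eq_sub, ← sum_sub_distrib, mul_sum]
  refine sum_congr rfl fun k _ => ?_
  rw [mul_add, mul_sub, cos_add, cos_sub, sin_add, sin_sub]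
  ring

end TrigPoly

theorem epsr_odd_general (r : ℕ) (Ω : Fin r → ℝ)
    (a0 : ℝ) (a b : Fin r → ℝ) (f : ℝ → ℝ)
    (hf : ∀ x, f x = a0 + ∑ k, (a k * Real.cos (Ω k * x) + b k * Real.sin (Ω k * x)))
    (d : ℕ) (hd : Odd d)
    (x : Fin r → ℝ) (A : Matrix (Fin r) (Fin r) ℝ)
    (hA : ∀ i k, A i k = Real.sin (Ω k * x i))
    (c : Fin r → ℝ)
    (hc : Aᵀ.mulVec c = fun k => (-1 : ℝ) ^ ((d - 1) / 2) * Ω k ^ d) :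
    ∀ xbar : ℝ, iteratedDeriv d f xbar =
      (1 / 2) * ∑ i, c i * (f (xbar + x i) - f (xbar - x i)) := by
  intro xbar
  obtain ⟨m, rfl⟩ := hd
  set g : Fin r → ℝ := fun k => b k * cos (Ω k * xbar) - a k * sin (Ω k * xbar)
  have hf' : f = trigPoly a0 Ω a b := funext hf
  have hdiff : ∀ i, f (xbar + x i) - f (xbar - x i) = 2 * (A *ᵥ g) i := fun i => by
    simp only [hf', trigPoly_add_sub_trigPoly_sub, mulVec, dotProduct, hA, g]
  have hm : (2 * m + 1 - 1) / 2 = m := by omega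
  calc iteratedDeriv (2 * m + 1) f xbar = (Aᵀ *ᵥ c) ⬝ᵥ g := by
        rw [hf', iteratedDeriv_two_mul_add_one_trigPoly, hc, hm]; rfl
    _ = c ⬝ᵥ (A *ᵥ g) := by rw [mulVec_transpose, dotProduct_mulVec]
    _ = (1 / 2) * ∑ i, c i * (f (xbar + x i) - f (xbar - x i)) := by
        simp only [hdiff, dotProduct, mul_sum]
        refine sum_congr rfl fun i _ => ?_
        ring

theorem epsr_odd (r : ℕ) (hr : 0 < r) (Ω : Fin r → ℝ)
    (hΩpos : ∀ k, 0 < Ω k) (hΩmono : StrictMono Ω)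
    (a0 : ℝ) (a b : Fin r → ℝ) (f : ℝ → ℝ)
    (hf : ∀ x, f x = a0 + ∑ k, (a k * Real.cos (Ω k * x) + b k * Real.sin (Ω k * x)))
    (d : ℕ) (hd : Odd d)
    (x : Fin r → ℝ) (A : Matrix (Fin r) (Fin r) ℝ)
    (hA : ∀ i k, A i k = Real.sin (Ω k * x i)) (hinv : IsUnit A)
    (c : Fin r → ℝ)
    (hc : Aᵀ.mulVec c = fun k => (-1 : ℝ) ^ ((d - 1) / 2) * Ω k ^ d) :
    ∀ xbar : ℝ, iteratedDeriv d f xbar =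
      (1 / 2) * ∑ i, c i * (f (xbar + x i) - f (xbar - x i)) :=
  epsr_odd_general r Ω a0 a b f hf d hd x A hA c hc
end

section
/- Let r ≥ 1, let d be an odd positive integer, and let x_1,…,x_r ∈ ℝ be any nodes such that the r×r matrix A(x) with entries A_{i,k} = sin(k·x_i) is invertible. Let b(x) = (A(x)ᵀ)⁻¹ p where p_k = (-1)^{(d-1)/2} k^d. Then ‖b(x)‖₁ ≥ r^d, with equality when x_i = π/(2r) + (i-1)π/r. -/
/-!
The row `k = r` of `Aᵀ b = p` reads `∑ᵢ sin (r xᵢ) bᵢ = ± r ^ d`, and `|sin| ≤ 1` gives the lower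
bound. At the equidistant nodes `sin (r xᵢ) = (-1) ^ i` and the sine columns are orthogonal, so `b`
is explicit: up to the sign `(-1) ^ i`, `r bᵢ` is the cosine polynomial
`r ^ d + 2 ∑_{0 < m < r} (r - m) ^ d cos (m xᵢ)`. Since `m ↦ (r - m) ^ d` is convex, two summations
by parts make it a nonnegative combination of Fejér kernels. So every `± sin (r xᵢ) bᵢ` equals
`|bᵢ|`, and the bound is attained.
-/

open Real Finset Matrix

lemma sum_range_mul_eq_by_parts {R : Type*} [CommRing R] (a u : ℕ → R) (n : ℕ) :
    ∑ m ∈ range n, a m * u m =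
      ∑ m ∈ range n, (a m - a (m + 1)) * ∑ j ∈ range (m + 1), u j +
        a n * ∑ j ∈ range n, u j := by
  induction n with
  | zero => simp
  | succ n ih => rw [sum_range_succ, ih, sum_range_succ _ n, sum_range_succ u]; ring

lemma sin_add_mul_sin_sub (x y : ℝ) : sin (x + y) * sin (x - y) = sin x ^ 2 - sin y ^ 2 := by
  rw [sin_add, sin_sub]
  linear_combination sin x ^ 2 * sin_sq_add_cos_sq y - sin y ^ 2 * sin_sq_add_cos_sq x

lemma two_mul_sin_mul_sum_cos_odd_mul (θ : ℝ) (n : ℕ) :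
    2 * sin θ * ∑ i ∈ range n, cos ((2 * i + 1) * θ) = sin (2 * n * θ) := by
  induction n with
  | zero => simp
  | succ n ih =>
    rw [sum_range_succ, mul_add, ih, two_mul_sin_mul_cos]
    push_cast
    rw [show θ - (2 * n + 1) * θ = -(2 * n * θ) by ring, sin_neg]
    ring_nf

section FourierCosine

variable (t : ℝ)

/-- The terms of `1 + 2 cos t + 2 cos 2t + ⋯`. -/
noncomputable def cosTerm (m : ℕ) : ℝ := if m = 0 then 1 else 2 * cos (m * t)

noncomputable def dirichletKernel (m : ℕ) : ℝ := ∑ j ∈ range (m + 1), cosTerm t j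

/-- `m + 1` times the Fejér kernel of order `m`. -/
noncomputable def fejerSum (m : ℕ) : ℝ := ∑ j ∈ range (m + 1), dirichletKernel t j

lemma sin_half_mul_dirichletKernel (m : ℕ) :
    sin (t / 2) * dirichletKernel t m = sin ((2 * m + 1) * (t / 2)) := by
  induction m with
  | zero => simp [dirichletKernel, cosTerm]
  | succ m ih =>
    rw [dirichletKernel, sum_range_succ, ← dirichletKernel, mul_add, ih, cosTerm,
      if_neg m.succ_ne_zero, ← mul_assoc, mul_comm _ (2 : ℝ), two_mul_sin_mul_cos]
    push_cast
    rw [show t / 2 - (m + 1) * t = -((2 * m + 1) * (t / 2)) by ring, sin_neg]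
    ring_nf

lemma sin_half_sq_mul_fejerSum (m : ℕ) :
    sin (t / 2) ^ 2 * fejerSum t m = sin ((m + 1) * (t / 2)) ^ 2 := by
  induction m with
  | zero => simp [fejerSum, dirichletKernel, cosTerm]
  | succ m ih =>
    have hD : sin (t / 2) ^ 2 * dirichletKernel t (m + 1) =
        sin (t / 2) * sin ((2 * ((m + 1 : ℕ) : ℝ) + 1) * (t / 2)) := by
      rw [sq, mul_assoc, sin_half_mul_dirichletKernel]
    rw [fejerSum, sum_range_succ, ← fejerSum, mul_add, ih, hD]
    have := sin_add_mul_sin_sub ((m + 1 + 1) * (t / 2)) ((m + 1) * (t / 2))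
    rw [show (m + 1 + 1) * (t / 2) + (m + 1) * (t / 2) = (2 * ((m + 1 : ℕ) : ℝ) + 1) * (t / 2) by
      push_cast; ring, show (m + 1 + 1) * (t / 2) - (m + 1) * (t / 2) = t / 2 by ring] at this
    push_cast at this ⊢
    linear_combination this

variable {t}

lemma fejerSum_nonneg (ht : sin (t / 2) ≠ 0) (m : ℕ) : 0 ≤ fejerSum t m := by
  have h := sin_half_sq_mul_fejerSum t m
  have : 0 < sin (t / 2) ^ 2 := by positivity
  nlinarith [sq_nonneg (sin ((m + 1) * (t / 2)))]

lemma sum_mul_cosTerm_nonneg (ht : sin (t / 2) ≠ 0) {a : ℕ → ℝ} {r : ℕ}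
    (hconv : ∀ m < r, 2 * a (m + 1) ≤ a m + a (m + 2)) (har : a r = 0) (har' : a (r + 1) = 0) :
    0 ≤ ∑ m ∈ range r, a m * cosTerm t m := by
  rw [sum_range_mul_eq_by_parts, har, zero_mul, add_zero]
  simp only [← dirichletKernel.eq_1]
  rw [sum_range_mul_eq_by_parts, har, har', sub_zero, zero_mul, add_zero]
  simp only [← fejerSum.eq_1]
  refine sum_nonneg fun m hm => mul_nonneg ?_ (fejerSum_nonneg ht m)
  linarith [hconv m (mem_range.mp hm)]

end FourierCosine

/-- The node `x_{i+1} = π / (2r) + i π / r`; these are the zeros of `cos (r x)` in `(0, π)`. -/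
noncomputable def chebyshevAngle (r i : ℕ) : ℝ := (2 * i + 1) * π / (2 * r)

section ChebyshevAngle

variable {r : ℕ}

lemma natCast_mul_chebyshevAngle (hr : r ≠ 0) (i : ℕ) : r * chebyshevAngle r i = π / 2 + i * π := by
  unfold chebyshevAngle; field_simp; ring

lemma sin_natCast_mul_chebyshevAngle (hr : r ≠ 0) (i : ℕ) :
    sin (r * chebyshevAngle r i) = (-1) ^ i := by
  rw [natCast_mul_chebyshevAngle hr, sin_add, sin_pi_div_two, cos_pi_div_two, sin_nat_mul_pi,
    cos_nat_mul_pi]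
  ring

lemma cos_natCast_mul_chebyshevAngle (hr : r ≠ 0) (i : ℕ) : cos (r * chebyshevAngle r i) = 0 := by
  rw [natCast_mul_chebyshevAngle hr, cos_add, sin_pi_div_two, cos_pi_div_two, sin_nat_mul_pi]
  ring

lemma sin_mul_chebyshevAngle (hr : r ≠ 0) (y : ℝ) (i : ℕ) :
    sin (y * chebyshevAngle r i) = (-1) ^ i * cos ((r - y) * chebyshevAngle r i) := by
  have hsq : ((-1 : ℝ) ^ i) ^ 2 = 1 := by rw [← pow_mul, mul_comm, pow_mul, neg_one_sq, one_pow]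
  rw [sub_mul, cos_sub, sin_natCast_mul_chebyshevAngle hr, cos_natCast_mul_chebyshevAngle hr]
  linear_combination -sin (y * chebyshevAngle r i) * hsq

lemma sin_half_chebyshevAngle_ne_zero {i : ℕ} (hi : i < r) : sin (chebyshevAngle r i / 2) ≠ 0 := by
  have hi' : (i : ℝ) + 1 ≤ r := by exact_mod_cast hi
  have hr : (0 : ℝ) < r := by linarith [(i.cast_nonneg : (0 : ℝ) ≤ i)]
  rw [chebyshevAngle, div_div]
  refine (sin_pos_of_pos_of_lt_pi (by positivity) ?_).ne'
  rw [div_lt_iff₀ (by positivity)]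
  nlinarith [pi_pos]

/-- The angles `(2i+1)θ` with `θ = mπ/(2r)` telescope against `2 sin θ` to `sin (mπ) = 0`. -/
lemma sum_cos_intCast_mul_chebyshevAngle (hr : r ≠ 0) {m : ℤ} (hm : ¬ (2 * r : ℤ) ∣ m) :
    ∑ i ∈ range r, cos (m * chebyshevAngle r i) = 0 := by
  have hθ : sin (m * π / (2 * r)) ≠ 0 := by
    rw [Ne, sin_eq_zero_iff]
    rintro ⟨n, hn⟩
    rw [eq_div_iff (by positivity)] at hn
    refine hm ⟨n, ?_⟩
    have : (m : ℝ) = 2 * r * n := mul_right_cancel₀ pi_ne_zero (by linarith)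
    exact_mod_cast this
  have htel := two_mul_sin_mul_sum_cos_odd_mul (m * π / (2 * r)) r
  rw [show 2 * (r : ℝ) * (m * π / (2 * r)) = m * π by field_simp, sin_int_mul_pi] at htel
  convert (mul_eq_zero.mp htel).resolve_left (by positivity) using 2 with i
  unfold chebyshevAngle; ring_nf

lemma sum_sin_mul_sin_chebyshevAngle (hr : r ≠ 0) {k l : ℕ} (hk : 0 < k) (hkr : k ≤ r)
    (hl : 0 < l) (hlr : l ≤ r) :
    ∑ i ∈ range r, sin (k * chebyshevAngle r i) * sin (l * chebyshevAngle r i) =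
      if k = l then (if k = r then (r : ℝ) else r / 2) else 0 := by
  have hsum : ∀ m : ℤ, 0 < |m| → |m| < 2 * r →
      ∑ i ∈ range r, cos (m * chebyshevAngle r i) = 0 := fun m h0 h1 =>
    sum_cos_intCast_mul_chebyshevAngle hr fun hdvd => h0.ne' (abs_eq_zero.mpr
      (Int.eq_zero_of_abs_lt_dvd hdvd h1))
  have hprod : ∀ i, sin (k * chebyshevAngle r i) * sin (l * chebyshevAngle r i) =
      (cos (((k - l : ℤ) : ℝ) * chebyshevAngle r i) -
        cos (((k + l : ℤ) : ℝ) * chebyshevAngle r i)) / 2 := by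
    intro i
    rw [eq_div_iff two_ne_zero, mul_comm, ← mul_assoc, two_mul_sin_mul_sin]
    push_cast; ring_nf
  simp only [hprod, ← sum_div, sum_sub_distrib]
  split_ifs with hkl hkr'
  · subst hkl hkr'
    have hcos : ∀ i, cos (((k + k : ℤ) : ℝ) * chebyshevAngle k i) = -1 := fun i => by
      rw [show ((k + k : ℤ) : ℝ) * chebyshevAngle k i = 2 * (k * chebyshevAngle k i) by
        push_cast; ring, cos_two_mul, cos_natCast_mul_chebyshevAngle hr]
      ring
    simp only [sub_self, Int.cast_zero, zero_mul, cos_zero, hcos, sum_const, card_range]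
    ring
  · subst hkl
    rw [hsum (k + k) (by rw [abs_of_pos (by omega)]; omega) (by rw [abs_of_pos (by omega)]; omega)]
    simp
  · rw [hsum (k - l) (by rw [abs_pos]; omega) (by rw [abs_lt]; omega),
      hsum (k + l) (by rw [abs_of_pos (by omega)]; omega) (by rw [abs_of_pos (by omega)]; omega)]
    simp

end ChebyshevAngle

lemma two_mul_add_one_pow_le (x : ℝ) (hx : 0 ≤ x) (d : ℕ) :
    2 * (x + 1) ^ d ≤ x ^ d + (x + 2) ^ d := by
  have h := (convexOn_pow d).2 (Set.mem_Ici.mpr hx) (Set.mem_Ici.mpr (by linarith : 0 ≤ x + 2))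
    (by norm_num : (0 : ℝ) ≤ 1 / 2) (by norm_num : (0 : ℝ) ≤ 1 / 2) (by norm_num)
  rw [smul_eq_mul, smul_eq_mul, smul_eq_mul, smul_eq_mul,
    show 1 / 2 * x + 1 / 2 * (x + 2) = x + 1 by ring] at h
  linarith

lemma sum_natSub_pow_mul_cosTerm_nonneg {t : ℝ} (ht : sin (t / 2) ≠ 0) (r : ℕ) {d : ℕ}
    (hd : d ≠ 0) :
    0 ≤ ∑ m ∈ range r, ((r - m : ℕ) : ℝ) ^ d * cosTerm t m := by
  refine sum_mul_cosTerm_nonneg ht (fun m hm => ?_) (by simp [hd]) (by simp [hd])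
  rcases (by omega : m + 2 ≤ r ∨ m + 1 = r) with hm2 | rfl
  · obtain ⟨n, rfl⟩ : ∃ n, r = n + 2 + m := ⟨r - (m + 2), by omega⟩
    rw [show n + 2 + m - m = n + 2 by omega, show n + 2 + m - (m + 1) = n + 1 by omega,
      show n + 2 + m - (m + 2) = n by omega]
    push_cast
    linarith [two_mul_add_one_pow_le n n.cast_nonneg d]
  · simp [hd]

lemma eq_mulVec_of_transpose_mul_self_eq_diagonal {n K : Type*} [Fintype n] [DecidableEq n]
    [Field K] {A : Matrix n n K} {w : n → K} (hw : ∀ k, w k ≠ 0) (hA : Aᵀ * A = diagonal w)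
    {b p : n → K} (hb : Aᵀ *ᵥ b = p) : b = A *ᵥ fun k => p k / w k := by
  have hinv : A * (diagonal w⁻¹ * Aᵀ) = 1 := by
    rw [mul_eq_one_comm, Matrix.mul_assoc, hA, diagonal_mul_diagonal, ← diagonal_one]
    congr 1
    ext k
    exact inv_mul_cancel₀ (hw k)
  calc b = (A * (diagonal w⁻¹ * Aᵀ)) *ᵥ b := by rw [hinv, one_mulVec]
    _ = A *ᵥ (diagonal w⁻¹ *ᵥ p) := by rw [← mulVec_mulVec, ← mulVec_mulVec, hb]
    _ = A *ᵥ fun k => p k / w k := by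
      congr 1
      ext k
      rw [mulVec_diagonal, Pi.inv_apply, div_eq_inv_mul]

lemma abs_transpose_mulVec_apply_le {m n : Type*} [Fintype m] (A : Matrix m n ℝ) (b : m → ℝ) (k : n)
    (hA : ∀ i, |A i k| ≤ 1) : |(Aᵀ *ᵥ b) k| ≤ ∑ i, |b i| :=
  calc |(Aᵀ *ᵥ b) k| = |∑ i, A i k * b i| := rfl
    _ ≤ ∑ i, |A i k * b i| := abs_sum_le_sum_abs _ _
    _ ≤ ∑ i, |b i| := sum_le_sum fun i _ => by
      rw [abs_mul]; exact mul_le_of_le_one_left (abs_nonneg _) (hA i)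

section SineMatrix

variable {r : ℕ} {A : Matrix (Fin r) (Fin r) ℝ}

lemma transpose_mul_self_eq_diagonal_of_chebyshevAngle
    (hA : ∀ i k : Fin r, A i k = sin (((k : ℕ) + 1 : ℝ) * chebyshevAngle r i)) :
    Aᵀ * A = diagonal fun k : Fin r => if (k : ℕ) + 1 = r then (r : ℝ) else r / 2 := by
  ext k l
  have horth := sum_sin_mul_sin_chebyshevAngle (Fin.pos k).ne' (k := k + 1) (l := l + 1)
    (by omega) k.isLt (by omega) l.isLt
  push_cast at horth
  rw [mul_apply, diagonal_apply]
  simp only [transpose_apply, hA]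
  rw [Fin.sum_univ_eq_sum_range (fun i => sin (((k : ℕ) + 1 : ℝ) * chebyshevAngle r i) *
    sin (((l : ℕ) + 1 : ℝ) * chebyshevAngle r i)), horth]
  simp only [Fin.val_inj]

lemma neg_one_pow_mul_eq_sum_natSub_pow_mul_cosTerm
    (hA : ∀ i k : Fin r, A i k = sin (((k : ℕ) + 1 : ℝ) * chebyshevAngle r i))
    {d e : ℕ} {b : Fin r → ℝ}
    (hb : Aᵀ *ᵥ b = fun k : Fin r => (-1) ^ e * ((k : ℕ) + 1 : ℝ) ^ d) (i : Fin r) :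
    (-1) ^ (e + i) * b i =
      (∑ m ∈ range r, ((r - m : ℕ) : ℝ) ^ d * cosTerm (chebyshevAngle r i) m) / r := by
  have hr : r ≠ 0 := (Fin.pos i).ne'
  rw [eq_mulVec_of_transpose_mul_self_eq_diagonal (fun k => by split_ifs <;> positivity)
    (transpose_mul_self_eq_diagonal_of_chebyshevAngle hA) hb]
  set g : ℕ → ℝ := fun k => ((k : ℝ) + 1) ^ d * cos ((r - ((k : ℝ) + 1)) * chebyshevAngle r i) /
    if k + 1 = r then (r : ℝ) else r / 2
  have hsign : ((-1 : ℝ) ^ (e + i)) * (-1) ^ (i : ℕ) * (-1) ^ e = 1 := by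
    rw [← pow_add, ← pow_add, Even.neg_one_pow ⟨e + i, by ring⟩]
  have hterm (k : Fin r) : (-1) ^ (e + i) * (A i k *
      ((-1) ^ e * ((k : ℕ) + 1 : ℝ) ^ d / if (k : ℕ) + 1 = r then (r : ℝ) else r / 2)) = g k := by
    rw [hA, sin_mul_chebyshevAngle hr]
    linear_combination (g k) * hsign
  calc (-1) ^ (e + i) * _ = ∑ k : Fin r, g k := by simp only [mulVec, dotProduct, mul_sum, hterm]
    _ = ∑ m ∈ range r, g (r - 1 - m) := by rw [Fin.sum_univ_eq_sum_range, sum_range_reflect]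
    _ = _ := by
      rw [sum_div]
      refine sum_congr rfl fun m hm => ?_
      have hm : m < r := mem_range.mp hm
      have hcast : ((r - 1 - m : ℕ) : ℝ) + 1 = ((r - m : ℕ) : ℝ) := by
        rw [← Nat.cast_add_one, show r - 1 - m + 1 = r - m by omega]
      have hsub : (r : ℝ) - ((r - m : ℕ) : ℝ) = m := by rw [Nat.cast_sub hm.le]; ring
      simp only [g, hcast, hsub, cosTerm, show r - 1 - m + 1 = r - m by omega]
      rcases eq_or_ne m 0 with rfl | hm0
      · simp
      · rw [if_neg (by omega), if_neg hm0]
        field_simp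

end SineMatrix

theorem l1_norm_coeffs_ge (r : ℕ) (hr : 0 < r) (d : ℕ) (hd : Odd d) :
    (∀ (x : Fin r → ℝ) (A : Matrix (Fin r) (Fin r) ℝ),
      (∀ i k : Fin r, A i k = Real.sin ((((k : ℕ) : ℝ) + 1) * x i)) →
      IsUnit A →
      ∀ bv : Fin r → ℝ,
        Aᵀ.mulVec bv =
          (fun k : Fin r => (-1 : ℝ) ^ ((d - 1) / 2) * (((k : ℕ) : ℝ) + 1) ^ d) →
        (r : ℝ) ^ d ≤ ∑ i, |bv i|) ∧
    (∀ (A : Matrix (Fin r) (Fin r) ℝ),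
      (∀ i k : Fin r,
        A i k = Real.sin ((((k : ℕ) : ℝ) + 1) * (π / (2 * r) + (i : ℕ) * (π / r)))) →
      ∀ bv : Fin r → ℝ,
        Aᵀ.mulVec bv =
          (fun k : Fin r => (-1 : ℝ) ^ ((d - 1) / 2) * (((k : ℕ) : ℝ) + 1) ^ d) →
        ∑ i, |bv i| = (r : ℝ) ^ d) := by
  set e := (d - 1) / 2
  let last : Fin r := ⟨r - 1, by omega⟩
  have hlast : ((last : ℕ) : ℝ) + 1 = r := by simp [last, Nat.cast_pred hr]
  constructor
  · intro x A hA _ bv hb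
    calc (r : ℝ) ^ d = |(Aᵀ *ᵥ bv) last| := by simp [hb, hlast, abs_pow]
      _ ≤ ∑ i, |bv i| := abs_transpose_mulVec_apply_le A bv last fun i => by
        rw [hA]; exact abs_sin_le_one _
  · intro A hA bv hb
    have hA' : ∀ i k : Fin r, A i k = sin (((k : ℕ) + 1 : ℝ) * chebyshevAngle r i) := fun i k => by
      rw [hA, chebyshevAngle]; congr 2; field_simp; ring
    have hA_last (i : Fin r) : A i last = (-1) ^ (i : ℕ) := by
      rw [hA', hlast, sin_natCast_mul_chebyshevAngle hr.ne']
    have habs (i : Fin r) : |bv i| = (-1) ^ e * (A i last * bv i) := by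
      have hsign : 0 ≤ (-1) ^ (e + i) * bv i := by
        rw [neg_one_pow_mul_eq_sum_natSub_pow_mul_cosTerm hA' hb]
        exact div_nonneg (sum_natSub_pow_mul_cosTerm_nonneg
          (sin_half_chebyshevAngle_ne_zero i.isLt) r hd.pos.ne') r.cast_nonneg
      rw [hA_last, ← mul_assoc, ← pow_add, ← abs_of_nonneg hsign, abs_mul, abs_neg_one_pow, one_mul]
    calc ∑ i, |bv i| = (-1) ^ e * (Aᵀ *ᵥ bv) last := by simp only [habs, ← mul_sum]; rfl
      _ = (r : ℝ) ^ d := by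
        simp only [hb, hlast]
        rw [← mul_assoc, ← pow_add, ← two_mul, pow_mul, neg_one_sq, one_pow, one_mul]
end

section
/- Let r ≥ 1 and x_i = π/(2r) + (i-1)π/r for i = 1,…,r, and let A be the r×r matrix with A_{i,k} = sin(k·x_i). Let b = (Aᵀ)⁻¹ p with p = (1,2,…,r)ᵀ. Then (1/2)‖b‖₂² = (2r² + 1)/6, i.e., Σ_{i=1}^r b_i² = (2r²+1)/3. -/
open Real Finset Matrix

/-!
The columns of `A` are orthogonal: at the nodes `x_i = (2i+1)π/(2r)` the product formula turns
`∑ᵢ sin (k xᵢ) sin (l xᵢ)` into sums `∑ᵢ cos ((2i+1)θ)`, which telescope against `2 sin θ` and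
vanish unless `θ` is a multiple of `π`. Hence `AᵀA = D` with `D = diag (r/2, …, r/2, r)`. Then
`b = A D⁻¹ p` and `‖b‖² = pᵀ D⁻¹ p = (2/r) ∑_{k=1}^{r} k² - r = (2r² + 1)/3`.
-/

theorem two_mul_sin_mul_sum_range_cos_odd_mul (n : ℕ) (a : ℝ) :
    2 * sin a * ∑ i ∈ range n, cos ((2 * i + 1) * a) = sin (2 * n * a) := by
  induction n with
  | zero => simp
  | succ n ih =>
    have step : sin (2 * (n + 1) * a) - sin (2 * n * a) = 2 * sin a * cos ((2 * n + 1) * a) := by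
      rw [sin_sub_sin]; ring_nf
    push_cast
    rw [sum_range_succ, mul_add, ih]
    linarith

/-- At the nodes `xᵢ = (2i+1)π/(2r)`, `2 ∑ᵢ sin (k xᵢ) sin (l xᵢ) = oddCosSum r (k - l) -
oddCosSum r (k + l)`; `sinMatrix` indexes frequencies from `0`, hence the `k + l + 2` below. -/
noncomputable def oddCosSum (r : ℕ) (m : ℤ) : ℝ :=
  ∑ i ∈ range r, cos ((2 * i + 1) * (m * π / (2 * r)))

theorem oddCosSum_zero (r : ℕ) : oddCosSum r 0 = r := by
  simp [oddCosSum]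

theorem oddCosSum_two_mul (r : ℕ) : oddCosSum r (2 * r) = -r := by
  rcases Nat.eq_zero_or_pos r with rfl | hr
  · simp [oddCosSum]
  have hθ : 2 * (r : ℝ) * π / (2 * r) = π := by
    field_simp
  have hcos (i : ℕ) : cos ((2 * i + 1) * π) = -1 := by
    rw [show (2 * i + 1 : ℝ) = ((2 * i + 1 : ℕ) : ℝ) by push_cast; ring, cos_nat_mul_pi,
      pow_succ, pow_mul]
    simp
  simp only [oddCosSum]
  push_cast
  simp [hθ, hcos]

theorem oddCosSum_eq_zero {r : ℕ} {m : ℤ} (hm : ¬ (2 * r : ℤ) ∣ m) : oddCosSum r m = 0 := by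
  rcases Nat.eq_zero_or_pos r with rfl | hr
  · simp [oddCosSum]
  have hsin : sin (m * π / (2 * r)) ≠ 0 := by
    rw [Ne, sin_eq_zero_iff]
    rintro ⟨n, hn⟩
    refine hm ⟨n, ?_⟩
    have : (m : ℝ) = 2 * r * n := by
      field_simp at hn; linarith
    exact_mod_cast this
  have key := two_mul_sin_mul_sum_range_cos_odd_mul r (m * π / (2 * r))
  rw [show 2 * (r : ℝ) * (m * π / (2 * r)) = m * π by field_simp, sin_int_mul_pi] at key
  exact (mul_eq_zero.mp key).resolve_left (mul_ne_zero two_ne_zero hsin)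

noncomputable def sinMatrix (r : ℕ) : Matrix (Fin r) (Fin r) ℝ :=
  of fun i k => sin (((k : ℕ) + 1) * (π / (2 * r) + (i : ℕ) * (π / r)))

theorem transpose_mul_sinMatrix_apply (r : ℕ) (k l : Fin r) :
    ((sinMatrix r)ᵀ * sinMatrix r) k l =
      (oddCosSum r ((k : ℕ) - (l : ℕ)) - oddCosSum r ((k : ℕ) + (l : ℕ) + 2)) / 2 := by
  have hr : (r : ℝ) ≠ 0 := by exact_mod_cast k.pos.ne'
  have prod (x y : ℝ) : sin x * sin y = (cos (x - y) - cos (x + y)) / 2 := by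
    rw [cos_sub, cos_add]; ring
  have angle (j i : ℕ) : ((j : ℝ) + 1) * (π / (2 * r) + i * (π / r)) =
      (2 * i + 1) * ((j + 1) * π / (2 * r)) := by
    field_simp; ring
  simp only [mul_apply, transpose_apply, sinMatrix, of_apply, angle, prod, oddCosSum,
    ← sum_div, ← sum_sub_distrib]
  rw [← Fin.sum_univ_eq_sum_range]
  congr 1
  refine sum_congr rfl fun i _ => ?_
  push_cast
  congr 2 <;> ring

noncomputable def sinGramDiag (r : ℕ) (k : Fin r) : ℝ :=
  if (k : ℕ) + 1 = r then r else r / 2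

theorem sinGramDiag_ne_zero {r : ℕ} (k : Fin r) : sinGramDiag r k ≠ 0 := by
  unfold sinGramDiag
  split_ifs <;> simp [k.pos.ne']

theorem transpose_mul_sinMatrix (r : ℕ) :
    (sinMatrix r)ᵀ * sinMatrix r = diagonal (sinGramDiag r) := by
  ext k l
  rw [transpose_mul_sinMatrix_apply, diagonal_apply, sinGramDiag]
  have hk := k.isLt
  have hl := l.isLt
  have hsum : oddCosSum r ((k : ℕ) + (l : ℕ) + 2) =
      if (k : ℕ) + 1 = r ∧ k = l then -(r : ℝ) else 0 := by
    split_ifs with h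
    · rw [← oddCosSum_two_mul]; congr 1; omega
    · refine oddCosSum_eq_zero fun hdvd => ?_
      have := Int.eq_zero_of_abs_lt_dvd hdvd (by rw [abs_lt]; constructor <;> omega)
      omega
  by_cases hkl : k = l
  · subst hkl
    by_cases hk : (k : ℕ) + 1 = r <;> simp [hk, hsum, oddCosSum_zero]
  · have hdiff : oddCosSum r ((k : ℕ) - (l : ℕ)) = 0 := by
      refine oddCosSum_eq_zero fun hdvd => hkl (Fin.ext ?_)
      have := Int.eq_zero_of_abs_lt_dvd hdvd (by rw [abs_lt]; constructor <;> omega)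
      omega
    simp [hkl, hsum, hdiff]

theorem Matrix.dotProduct_self_eq_sum_div_of_transpose_mul_self_eq_diagonal
    {n K : Type*} [Fintype n] [DecidableEq n] [Field K] {A : Matrix n n K} {d : n → K}
    (hA : Aᵀ * A = diagonal d) (hd : ∀ k, d k ≠ 0) {b p : n → K} (hb : Aᵀ *ᵥ b = p) :
    b ⬝ᵥ b = ∑ k, p k ^ 2 / d k := by
  have hunit : IsUnit Aᵀ := by
    have hdet : Aᵀ.det * A.det ≠ 0 := by
      rw [← det_mul, hA, det_diagonal]
      exact prod_ne_zero_iff.mpr fun k _ => hd k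
    exact (isUnit_iff_isUnit_det _).mpr (left_ne_zero_of_mul hdet).isUnit
  set c : n → K := fun k => p k / d k
  have hc : Aᵀ *ᵥ (A *ᵥ c) = p := by
    ext k
    rw [mulVec_mulVec, hA, mulVec_diagonal, mul_div_cancel₀ _ (hd k)]
  have hbc : b = A *ᵥ c := mulVec_injective_iff_isUnit.mpr hunit (hb.trans hc.symm)
  calc b ⬝ᵥ b = (A *ᵥ c) ⬝ᵥ b := by rw [← hbc]
    _ = c ⬝ᵥ (Aᵀ *ᵥ b) := by rw [← vecMul_transpose, dotProduct_mulVec]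
    _ = ∑ k, p k ^ 2 / d k := by
        rw [hb, dotProduct]
        exact sum_congr rfl fun k _ => by ring

theorem sum_range_add_one_sq (n : ℕ) :
    ∑ j ∈ range n, ((j : ℝ) + 1) ^ 2 = (n : ℝ) * (n + 1) * (2 * n + 1) / 6 := by
  induction n with
  | zero => simp
  | succ n ih => rw [sum_range_succ, ih]; push_cast; ring

theorem sum_sq_div_sinGramDiag {r : ℕ} (hr : 0 < r) :
    ∑ k : Fin r, ((k : ℕ) + 1 : ℝ) ^ 2 / sinGramDiag r k = (2 * (r : ℝ) ^ 2 + 1) / 3 := by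
  obtain ⟨n, rfl⟩ := Nat.exists_eq_add_one_of_ne_zero hr.ne'
  unfold sinGramDiag
  rw [Fin.sum_univ_eq_sum_range (fun k => ((k : ℝ) + 1) ^ 2 /
    (if k + 1 = n + 1 then ((n + 1 : ℕ) : ℝ) else (n + 1 : ℕ) / 2)), sum_range_succ,
    sum_congr rfl fun k hk => by rw [if_neg (by simp at hk; omega)], ← sum_div,
    sum_range_add_one_sq, if_pos rfl]
  push_cast
  field_simp
  ring

theorem l2_norm_coeffs_equidistant (r : ℕ) (hr : 0 < r)
    (A : Matrix (Fin r) (Fin r) ℝ)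
    (hA : ∀ i k : Fin r,
      A i k = Real.sin ((((k : ℕ) : ℝ) + 1) * (π / (2 * r) + (i : ℕ) * (π / r))))
    (bv : Fin r → ℝ)
    (hb : Aᵀ.mulVec bv = fun k : Fin r => ((k : ℕ) : ℝ) + 1) :
    ∑ i, bv i ^ 2 = (2 * (r : ℝ) ^ 2 + 1) / 3 := by
  obtain rfl : A = sinMatrix r := ext hA
  rw [← sum_sq_div_sinGramDiag hr, ← dotProduct_self_eq_sum_div_of_transpose_mul_self_eq_diagonal
    (transpose_mul_sinMatrix r) sinGramDiag_ne_zero hb]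
  simp [dotProduct, sq]
end
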